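/- Let Φ be a sequence of N positive roots of A_r spanning the hyperplane E_r, with m_{ij} the multiplicity of e^i − e^j in Φ. Then the nice-chamber volume polynomial v_Φ^+(a_1,…,a_r) is homogeneous of degree N − r, is divisible in ℚ[a_1,…,a_r] by a_1^q where q = (Σ_{k=2}^{r+1} m_{1k}) − 1, and has degree at most m_{r,r+1} − 1 in the variable a_r. -/

import Mathlib

noncomputable section

/-- The tower of rational function fields `ℚ ⊂ ℚ(x_1) ⊂ ℚ(x_1,x_2) ⊂ ⋯`. -/
def RFpair : ℕ → ((K : Type) × Field K) := fun n =>
  Nat.rec ⟨ℚ, inferInstance⟩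
    (fun _ p => letI : Field p.1 := p.2; ⟨RatFunc p.1, inferInstance⟩) n

/-- The field `ℚ(x_1,…,x_n)` of rational functions in `n` variables. -/
abbrev RF (n : ℕ) : Type := (RFpair n).1

instance RFfield (n : ℕ) : Field (RF n) := (RFpair n).2

/-- The residue at `x_n = 0`: the coefficient of `x_n⁻¹` in the Laurent expansion at
`x_n = 0` over the field `ℚ(x_1,…,x_{n-1})`. -/
def resRF (n : ℕ) (f : RatFunc (RF n)) : RF n :=
  ((@algebraMap (RatFunc (RF n)) (LaurentSeries (RF n)) _ _
    (RatFunc.liftAlgebra (RF n) (LaurentSeries (RF n)))) f).coeff (-1)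

/-- The iterated residue `Ires_{x=0} = Res_{x_1=0} ⋯ Res_{x_n=0}` (innermost residue in
the last variable). -/
def Ires : (n : ℕ) → RF n → ℚ
  | 0, f => f
  | n+1, f => Ires n (resRF n f)

/-- The variable `x_i` (1-indexed); `0` if out of range, in particular `x_{n+1} = 0`. -/
def Xv : (n : ℕ) → ℕ → RF n
  | 0, _ => 0
  | n+1, i =>
    if i = n+1 then (RatFunc.X : RatFunc (RF n))
    else ((RatFunc.C (Xv n i) : RatFunc (RF n)) : RF (n+1))

/-- The positive root `e^{p.1} - e^{p.2}` of `A_r` as a rational vector. -/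
def rootVQ (r : ℕ) (p : Fin (r+1) × Fin (r+1)) : Fin (r+1) → ℚ :=
  fun k => if k = p.1 then 1 else if k = p.2 then -1 else 0

/-- `Φ` (given by its multiplicity function `m`) spans `E_r`: its span is the span of all
positive roots. -/
def SpansE (r : ℕ) (m : Fin (r+1) → Fin (r+1) → ℕ) : Prop :=
  Submodule.span ℚ {v | ∃ p : Fin (r+1) × Fin (r+1), p.1 < p.2 ∧ 0 < m p.1 p.2 ∧
      v = rootVQ r p} =
    Submodule.span ℚ {v | ∃ p : Fin (r+1) × Fin (r+1), p.1 < p.2 ∧ v = rootVQ r p}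

/-- The number of elements of `Φ` (with multiplicities). -/
def Nphi (r : ℕ) (m : Fin (r+1) → Fin (r+1) → ℕ) : ℕ := ∑ a, ∑ b, m a b

/-- The denominator `∏_{1 ≤ i < j ≤ r}(x_i - x_j)^{m_{ij}} · ∏_j x_j^{m_{j,r+1}}`
(using `x_{r+1} = 0`). -/
def denRF (r : ℕ) (m : Fin (r+1) → Fin (r+1) → ℕ) : RF r :=
  ∏ a : Fin (r+1), ∏ b : Fin (r+1),
    if a < b then (Xv r ((a : ℕ)+1) - Xv r ((b : ℕ)+1)) ^ (m a b) else 1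

/-- The iterated residue `c_i = Ires_{x=0} (x_1^{i_1}⋯x_r^{i_r} / denominator)`. -/
def coeffI (r : ℕ) (m : Fin (r+1) → Fin (r+1) → ℕ) (i : Fin r → ℕ) : ℚ :=
  Ires r ((∏ j : Fin r, Xv r ((j : ℕ)+1) ^ (i j)) / denRF r m)

/-- The nice-chamber volume polynomial
`v_Φ^+(a) = ∑_{|i| = N-r} c_i · ∏_j a_j^{i_j}/i_j!`. -/
def vPlus (r : ℕ) (m : Fin (r+1) → Fin (r+1) → ℕ) : MvPolynomial (Fin r) ℚ :=
  ∑ i ∈ Finset.Nat.antidiagonalTuple r (Nphi r m - r),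
    MvPolynomial.C (coeffI r m i / ∏ j, (Nat.factorial (i j) : ℚ)) *
      ∏ j, MvPolynomial.X j ^ (i j)


/-!
Homogeneity holds term by term; the other two claims say that certain `c_i` vanish.

Expanding each `x_{k+1}` at `0` over `ℚ(x_1,…,x_k)` puts us in the regime `x_1 ≫ ⋯ ≫ x_r`, where
`(x_1 - x_j)⁻¹ = x_1⁻¹ ∑ (x_j / x_1)^k` has `x_1`-degree `-1` (also for `x_{r+1} = 0`) and every
factor not involving `x_1` has `x_1`-degree `0`. So the integrand of `c_i` has `x_1`-degree at most
`i_1 - ∑_k m_{1k}`; residues in `x_r, …, x_2` do not raise it, and once it is `≤ -2` the final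
residue in `x_1` is zero.

In the outermost variable `x_r` only `x_r^{i_r}` and `x_r^{-m_{r,r+1}}` have nonzero order, since
`(x_j - x_r)⁻¹` is a power series in `x_r`. So the integrand has order `≥ i_r - m_{r,r+1}` in `x_r`
and its residue there vanishes when `i_r ≥ m_{r,r+1}`.

Both bounds are ℤ-indexed filtrations that are graded monoids, so the bound for the integrand is
the sum of the bounds for its factors.
-/

open scoped RatFunc LaurentSeries

section Filtration

variable {R S : Type*} [Ring R] [Ring S]

variable (R) in
def trivFiltration (d : ℤ) : AddSubgroup R := if 0 ≤ d then ⊤ else ⊥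

theorem mem_trivFiltration {d : ℤ} {x : R} : x ∈ trivFiltration R d ↔ 0 ≤ d ∨ x = 0 := by
  unfold trivFiltration
  split_ifs with h <;> simp [h]

theorem mem_trivFiltration_of_nonneg {d : ℤ} (x : R) (hd : 0 ≤ d) : x ∈ trivFiltration R d :=
  mem_trivFiltration.2 (.inl hd)

instance : SetLike.GradedMonoid (trivFiltration R) where
  one_mem := mem_trivFiltration_of_nonneg _ le_rfl
  mul_mem _ _ _ _ ha hb := by
    rw [mem_trivFiltration] at *
    rcases ha with ha | rfl
    · rcases hb with hb | rfl
      · exact .inl (by omega)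
      · simp
    · simp

theorem trivFiltration_mono : Monotone (trivFiltration R) := fun _ _ hde _ hx => by
  rw [mem_trivFiltration] at *
  exact hx.imp_left hde.trans'

def pullbackFiltration (φ : R →+* S) (F : ℤ → AddSubgroup S) (d : ℤ) : AddSubgroup R :=
  (F d).comap φ.toAddMonoidHom

variable {φ : R →+* S} {F : ℤ → AddSubgroup S}

theorem mem_pullbackFiltration {d : ℤ} {x : R} : x ∈ pullbackFiltration φ F d ↔ φ x ∈ F d :=
  Iff.rfl

instance pullbackFiltration.gradedMonoid [SetLike.GradedMonoid F] :
    SetLike.GradedMonoid (pullbackFiltration φ F) where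
  one_mem := by simpa [mem_pullbackFiltration] using SetLike.one_mem_graded F
  mul_mem _ _ _ _ hx hy := by
    simpa [mem_pullbackFiltration] using SetLike.mul_mem_graded (A := F) hx hy

theorem pullbackFiltration_mono (hF : Monotone F) : Monotone (pullbackFiltration φ F) :=
  fun _ _ hde _ hx => hF hde hx

end Filtration

namespace LaurentSeries

variable {R : Type*} [Ring R] {s d : ℤ} {F : ℤ → AddSubgroup R}

/-- The filtration of `R⸨X⸩` in which `x X ^ k` has degree `deg x + s k`, where `deg` is the
degree for `F`. -/
def weightFiltration (s : ℤ) (F : ℤ → AddSubgroup R) (d : ℤ) : AddSubgroup R⸨X⸩ where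
  carrier := {f | ∀ k, f.coeff k ∈ F (d - s * k)}
  zero_mem' _ := zero_mem _
  add_mem' hf hg k := add_mem (hf k) (hg k)
  neg_mem' hf k := neg_mem (hf k)

instance [SetLike.GradedMonoid F] : SetLike.GradedMonoid (weightFiltration s F) where
  one_mem k := by
    rw [HahnSeries.coeff_one]
    split_ifs with hk
    · simpa [hk] using SetLike.one_mem_graded F
    · exact zero_mem _
  mul_mem _ _ f g hf hg k := by
    rw [HahnSeries.coeff_mul]
    refine sum_mem fun ij hij => ?_
    rw [Finset.mem_antidiagonal] at hij
    convert SetLike.mul_mem_graded (hf ij.1) (hg ij.2) using 2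
    rw [← hij.2.2]
    ring

theorem weightFiltration_mono (hF : Monotone F) : Monotone (weightFiltration s F) :=
  fun _ _ hde _ hf k => hF (by omega) (hf k)

theorem single_mem_weightFiltration {k : ℤ} {x : R} (hx : x ∈ F (d - s * k)) :
    HahnSeries.single k x ∈ weightFiltration s F d := fun j => by
  rw [HahnSeries.coeff_single]
  split_ifs with h
  · exact h ▸ hx
  · exact zero_mem _

theorem invUnitsSub_mem_weightFiltration [SetLike.GradedMonoid F] (hF : Monotone F)
    (hs : s ≤ 0) (hd : d ≤ 0) {u : Rˣ} (hu : (↑u⁻¹ : R) ∈ F d) :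
    (PowerSeries.invUnitsSub u : R⸨X⸩) ∈ weightFiltration s F d := fun k => by
  rw [PowerSeries.coeff_coe]
  split_ifs with hk
  · exact zero_mem _
  · rw [PowerSeries.coeff_invUnitsSub, one_divp, ← inv_pow, Units.val_pow_eq_pow_val]
    refine hF ?_ (SetLike.pow_mem_graded _ hu)
    rw [nsmul_eq_mul, Nat.cast_succ, Int.natCast_natAbs, abs_of_nonneg (not_lt.1 hk)]
    nlinarith

end LaurentSeries

namespace RatFunc

open LaurentSeries

variable {K : Type*} [Field K] {s d : ℤ} {F : ℤ → AddSubgroup K}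

theorem coe_C (c : K) : ((C c : RatFunc K) : K⸨X⸩) = HahnSeries.C c := by
  rw [← algebraMap_C, ← IsScalarTower.algebraMap_apply, Polynomial.algebraMap_hahnSeries_apply,
    Polynomial.coe_C, HahnSeries.ofPowerSeries_C]

theorem coe_X_inv : (((X : RatFunc K)⁻¹ : RatFunc K) : K⸨X⸩) = HahnSeries.single (-1) 1 := by
  rw [map_inv₀, coe_X, HahnSeries.inv_single, inv_one]

theorem coe_C_sub_X_inv {c : K} (hc : c ≠ 0) :
    (((C c - X)⁻¹ : RatFunc K) : K⸨X⸩) = (PowerSeries.invUnitsSub (Units.mk0 c hc) : K⸨X⸩) := by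
  rw [map_inv₀]
  refine inv_eq_of_mul_eq_one_left ?_
  have h := PowerSeries.invUnitsSub_mul_sub (Units.mk0 c hc)
  rw [Units.val_mk0] at h
  rw [map_sub, coe_C, coe_X, ← PowerSeries.coe_C, ← PowerSeries.coe_X, ← map_sub, ← map_mul, h,
    map_one]

abbrev laurentFiltration (s : ℤ) (F : ℤ → AddSubgroup K) : ℤ → AddSubgroup (RatFunc K) :=
  pullbackFiltration (algebraMap (RatFunc K) K⸨X⸩) (weightFiltration s F)

theorem C_mem_laurentFiltration {c : K} (hc : c ∈ F d) : C c ∈ laurentFiltration s F d := by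
  simpa [mem_pullbackFiltration, coe_C] using
    single_mem_weightFiltration (s := s) (k := 0) (by simpa using hc)

theorem X_mem_laurentFiltration (h : (1 : K) ∈ F (d - s)) : X ∈ laurentFiltration s F d := by
  simpa [mem_pullbackFiltration] using
    single_mem_weightFiltration (s := s) (k := 1) (by simpa using h)

theorem X_inv_mem_laurentFiltration (h : (1 : K) ∈ F (d + s)) :
    X⁻¹ ∈ laurentFiltration s F d := by
  simpa [mem_pullbackFiltration, coe_X_inv] using
    single_mem_weightFiltration (s := s) (k := -1) (by simpa using h)

theorem C_sub_X_inv_mem_laurentFiltration [SetLike.GradedMonoid F] (hF : Monotone F)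
    (hs : s ≤ 0) (hd : d ≤ 0) {c : K} (hc : c ≠ 0) (hc' : c⁻¹ ∈ F d) :
    (C c - X)⁻¹ ∈ laurentFiltration s F d := by
  rw [mem_pullbackFiltration, coe_C_sub_X_inv hc]
  exact invUnitsSub_mem_weightFiltration hF hs hd (by simpa using hc')

end RatFunc

open LaurentSeries RatFunc

/-- `RF (n+1)` is `RatFunc (RF n)` only after unfolding `RFpair`, which rewriting does not see;
this equivalence makes the identification explicit. -/
def RF.succEquiv (n : ℕ) : RF (n+1) ≃+* RatFunc (RF n) := RingEquiv.refl _

theorem Ires_succ (n : ℕ) (f : RF (n+1)) :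
    Ires (n+1) f = Ires n ((RF.succEquiv n f : (RF n)⸨X⸩).coeff (-1)) := rfl

theorem Ires_zero : ∀ n, Ires n 0 = 0
  | 0 => rfl
  | n+1 => by
    rw [Ires_succ, map_zero, map_zero, HahnSeries.coeff_zero]
    exact Ires_zero n

theorem succEquiv_Xv_self (n : ℕ) : RF.succEquiv n (Xv (n+1) (n+1)) = X := by
  simp [Xv]; rfl

theorem succEquiv_Xv_of_ne {n i : ℕ} (h : i ≠ n+1) :
    RF.succEquiv n (Xv (n+1) i) = C (Xv n i) := by
  simp [Xv, h]; rfl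

theorem Xv_eq_zero_of_lt : ∀ {n i : ℕ}, n < i → Xv n i = 0
  | 0, _, _ => rfl
  | n+1, i, h => (RF.succEquiv n).injective <| by
    rw [succEquiv_Xv_of_ne (by omega), Xv_eq_zero_of_lt (by omega : n < i), map_zero, map_zero]

theorem Xv_ne_zero : ∀ {n j : ℕ}, 0 < j → j ≤ n → Xv n j ≠ 0
  | 0, _, h1, h2 => by omega
  | n+1, j, h1, h2 => by
    rw [← (RF.succEquiv n).map_ne_zero_iff]
    rcases eq_or_ne j (n+1) with rfl | hj
    · rw [succEquiv_Xv_self]; exact X_ne_zero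
    · rw [succEquiv_Xv_of_ne hj]
      exact (map_ne_zero C).2 (Xv_ne_zero h1 (by omega))

theorem succEquiv_inv_Xv_sub_Xv {n s t : ℕ} (hst : s < t) :
    RF.succEquiv n ((Xv (n+1) s - Xv (n+1) t)⁻¹) =
      if s = n+1 then X⁻¹
      else if t = n+1 then (C (Xv n s) - X)⁻¹ else C ((Xv n s - Xv n t)⁻¹) := by
  rw [map_inv₀, map_sub]
  split_ifs with hs ht
  · rw [hs, succEquiv_Xv_self, Xv_eq_zero_of_lt (hs ▸ hst), map_zero, sub_zero]
  · rw [ht, succEquiv_Xv_self, succEquiv_Xv_of_ne hs]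
  · rw [succEquiv_Xv_of_ne hs, succEquiv_Xv_of_ne ht, ← map_sub, ← map_inv₀]

/-- The degree in `x_1` of the iterated Laurent expansion: the variable adjoined first is `x_1`,
so it gets weight `1`, and all later ones get weight `0`. -/
def firstVarDegFiltration : (n : ℕ) → ℤ → AddSubgroup (RF n)
  | 0 => trivFiltration ℚ
  | n+1 => pullbackFiltration (RF.succEquiv n : RF (n+1) →+* RatFunc (RF n))
      (laurentFiltration (if n = 0 then 1 else 0) (firstVarDegFiltration n))

theorem mem_firstVarDegFiltration_succ {n : ℕ} {d : ℤ} {f : RF (n+1)} :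
    f ∈ firstVarDegFiltration (n+1) d ↔
      RF.succEquiv n f ∈ laurentFiltration (if n = 0 then 1 else 0) (firstVarDegFiltration n) d :=
  Iff.rfl

instance firstVarDegFiltration.gradedMonoid :
    (n : ℕ) → SetLike.GradedMonoid (firstVarDegFiltration n)
  | 0 => inferInstanceAs (SetLike.GradedMonoid (trivFiltration ℚ))
  | n+1 =>
    have := firstVarDegFiltration.gradedMonoid n
    pullbackFiltration.gradedMonoid

theorem firstVarDegFiltration_mono : ∀ n, Monotone (firstVarDegFiltration n)
  | 0 => trivFiltration_mono
  | n+1 => pullbackFiltration_mono (pullbackFiltration_mono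
      (weightFiltration_mono (firstVarDegFiltration_mono n)))

theorem Xv_mem_firstVarDegFiltration :
    ∀ n j, Xv n j ∈ firstVarDegFiltration n (if j = 1 then 1 else 0)
  | 0, _ => zero_mem _
  | n+1, j => by
    rw [mem_firstVarDegFiltration_succ]
    rcases eq_or_ne j (n+1) with rfl | hj
    · rw [succEquiv_Xv_self]
      refine X_mem_laurentFiltration ?_
      convert SetLike.one_mem_graded (firstVarDegFiltration n) using 2
      split_ifs <;> omega
    · rw [succEquiv_Xv_of_ne hj]
      exact C_mem_laurentFiltration (Xv_mem_firstVarDegFiltration n j)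

theorem inv_Xv_sub_Xv_mem_firstVarDegFiltration : ∀ {n s t : ℕ}, 0 < s → s < t →
    (Xv n s - Xv n t)⁻¹ ∈ firstVarDegFiltration n (if s = 1 then -1 else 0)
  | 0, _, _, _, _ => by simp [Xv]
  | n+1, s, t, hs, hst => by
    rw [mem_firstVarDegFiltration_succ, succEquiv_inv_Xv_sub_Xv hst]
    by_cases hsn : s = n+1
    · rw [if_pos hsn]
      refine X_inv_mem_laurentFiltration ?_
      convert SetLike.one_mem_graded (firstVarDegFiltration n) using 2
      split_ifs <;> omega
    by_cases htn : t = n+1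
    · rw [if_neg hsn, if_pos htn]
      have hc := inv_Xv_sub_Xv_mem_firstVarDegFiltration (n := n) hs (htn ▸ hst)
      rw [Xv_eq_zero_of_lt (lt_add_one n), sub_zero] at hc
      exact C_sub_X_inv_mem_laurentFiltration (firstVarDegFiltration_mono n)
        (by split_ifs <;> omega) (by split_ifs <;> omega) (Xv_ne_zero hs (by omega)) hc
    · rw [if_neg hsn, if_neg htn]
      exact C_mem_laurentFiltration (inv_Xv_sub_Xv_mem_firstVarDegFiltration hs hst)

theorem Ires_eq_zero_of_mem_firstVarDegFiltration :
    ∀ {n : ℕ} {f : RF (n+1)} {d : ℤ}, d ≤ -2 → f ∈ firstVarDegFiltration (n+1) d → Ires (n+1) f = 0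
  | 0, _, _, hd, hf => (mem_trivFiltration.1 (hf (-1))).resolve_left (by norm_num; omega)
  | n+1, f, _, hd, hf => by
    have h := hf (-1)
    simp only [if_neg n.succ_ne_zero, zero_mul, sub_zero] at h
    rw [Ires_succ]
    exact Ires_eq_zero_of_mem_firstVarDegFiltration hd h

theorem monomial_div_denRF_mem {r : ℕ} (m : Fin (r+1) → Fin (r+1) → ℕ) (i : Fin r → ℕ)
    (F : ℤ → AddSubgroup (RF r)) [SetLike.GradedMonoid F] (wX : Fin r → ℤ)
    (wD : Fin (r+1) → Fin (r+1) → ℤ) (hX : ∀ j : Fin r, Xv r (j+1) ∈ F (wX j))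
    (hD : ∀ a b : Fin (r+1), a < b → (Xv r (a+1) - Xv r (b+1))⁻¹ ∈ F (wD a b)) :
    (∏ j : Fin r, Xv r (j+1) ^ i j) / denRF r m ∈
      F (∑ j, i j • wX j + ∑ a, ∑ b, if a < b then m a b • wD a b else 0) := by
  rw [div_eq_mul_inv, denRF, ← Finset.prod_inv_distrib]
  refine SetLike.mul_mem_graded
    (SetLike.prod_pow_mem_graded F wX _ i fun j _ => hX j)
    (SetLike.prod_mem_graded F _ _ fun a _ => ?_)
  rw [← Finset.prod_inv_distrib]
  refine SetLike.prod_mem_graded F _ _ fun b _ => ?_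
  split_ifs with hab
  · rw [← inv_pow]
    exact SetLike.pow_mem_graded _ (hD a b hab)
  · rw [inv_one]
    exact SetLike.one_mem_graded F

theorem coeffI_eq_zero_of_lt {r : ℕ} (hr : 0 < r) (m : Fin (r+1) → Fin (r+1) → ℕ)
    (hm : m 0 0 = 0) (i : Fin r → ℕ) (hi : i ⟨0, hr⟩ + 2 ≤ ∑ b, m 0 b) : coeffI r m i = 0 := by
  obtain ⟨n, rfl⟩ : ∃ n, r = n + 1 := ⟨r - 1, by omega⟩
  rw [Fin.zero_eta] at hi
  refine Ires_eq_zero_of_mem_firstVarDegFiltration (d := i 0 - ∑ b, (m 0 b : ℤ))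
    (by rw [← Nat.cast_sum]; omega) ?_
  refine firstVarDegFiltration_mono _ (le_of_eq ?_) (monomial_div_denRF_mem m i _ _ _
    (fun j => Xv_mem_firstVarDegFiltration _ _) (fun a b hab =>
      inv_Xv_sub_Xv_mem_firstVarDegFiltration (Nat.succ_pos _) (Nat.succ_lt_succ hab)))
  rw [Finset.sum_eq_single (0 : Fin (n+1+1)) (fun a _ ha => by simp [ha]) (by simp),
    sub_eq_add_neg, ← Finset.sum_neg_distrib]
  congr 1
  · simp
  refine Finset.sum_congr rfl fun b _ => ?_
  rcases eq_or_ne b 0 with rfl | hb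
  · simp [hm]
  · simp [Fin.pos_iff_ne_zero.2 hb]

/-- `f` has degree `≤ d` iff its expansion in the outermost variable `x_{n+1}` has order `≥ -d`. -/
abbrev lastVarOrderFiltration (n : ℕ) : ℤ → AddSubgroup (RF (n+1)) :=
  pullbackFiltration (RF.succEquiv n : RF (n+1) →+* RatFunc (RF n))
    (laurentFiltration (-1) (trivFiltration (RF n)))

theorem lastVarOrderFiltration_mono (n : ℕ) : Monotone (lastVarOrderFiltration n) :=
  pullbackFiltration_mono (pullbackFiltration_mono (weightFiltration_mono trivFiltration_mono))

theorem Xv_mem_lastVarOrderFiltration (n j : ℕ) :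
    Xv (n+1) j ∈ lastVarOrderFiltration n (if j = n+1 then -1 else 0) := by
  rw [mem_pullbackFiltration, RingEquiv.coe_toRingHom]
  by_cases hj : j = n+1
  · rw [if_pos hj, hj, succEquiv_Xv_self]
    exact X_mem_laurentFiltration (mem_trivFiltration_of_nonneg _ (by norm_num))
  · rw [if_neg hj, succEquiv_Xv_of_ne hj]
    exact C_mem_laurentFiltration (mem_trivFiltration_of_nonneg _ le_rfl)

theorem inv_Xv_sub_Xv_mem_lastVarOrderFiltration {n s t : ℕ} (hs : 0 < s) (hst : s < t) :
    (Xv (n+1) s - Xv (n+1) t)⁻¹ ∈ lastVarOrderFiltration n (if s = n+1 then 1 else 0) := by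
  rw [mem_pullbackFiltration, RingEquiv.coe_toRingHom, succEquiv_inv_Xv_sub_Xv hst]
  by_cases hsn : s = n+1
  · rw [if_pos hsn, if_pos hsn]
    exact X_inv_mem_laurentFiltration (mem_trivFiltration_of_nonneg _ (by norm_num))
  rw [if_neg hsn, if_neg hsn]
  by_cases htn : t = n+1
  · rw [if_pos htn]
    exact C_sub_X_inv_mem_laurentFiltration trivFiltration_mono (by norm_num) le_rfl
      (Xv_ne_zero hs (by omega)) (mem_trivFiltration_of_nonneg _ le_rfl)
  · rw [if_neg htn]
    exact C_mem_laurentFiltration (mem_trivFiltration_of_nonneg _ le_rfl)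

theorem Ires_eq_zero_of_mem_lastVarOrderFiltration {n : ℕ} {f : RF (n+1)} {d : ℤ} (hd : d ≤ 0)
    (hf : f ∈ lastVarOrderFiltration n d) : Ires (n+1) f = 0 := by
  have h : (RF.succEquiv n f : (RF n)⸨X⸩).coeff (-1) = 0 :=
    (mem_trivFiltration.1 (hf (-1))).resolve_left (by omega)
  rw [Ires_succ, h, Ires_zero]

theorem coeffI_eq_zero_of_le {r : ℕ} (hr : 0 < r) (m : Fin (r+1) → Fin (r+1) → ℕ)
    (i : Fin r → ℕ) (hi : m ⟨r - 1, by omega⟩ (Fin.last r) ≤ i ⟨r - 1, by omega⟩) :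
    coeffI r m i = 0 := by
  obtain ⟨n, rfl⟩ : ∃ n, r = n + 1 := ⟨r - 1, by omega⟩
  change m (Fin.last n).castSucc (Fin.last (n+1)) ≤ i (Fin.last n) at hi
  refine Ires_eq_zero_of_mem_lastVarOrderFiltration
    (d := m (Fin.last n).castSucc (Fin.last (n+1)) - i (Fin.last n)) (by omega) ?_
  refine lastVarOrderFiltration_mono n (le_of_eq ?_) (monomial_div_denRF_mem m i _ _ _
    (fun j => Xv_mem_lastVarOrderFiltration _ _) (fun a b hab =>
      inv_Xv_sub_Xv_mem_lastVarOrderFiltration (Nat.succ_pos _) (Nat.succ_lt_succ hab)))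
  rw [Finset.sum_eq_single (Fin.last n) (fun j _ hj => by simp [Fin.ext_iff] at hj; simp [hj])
      (by simp),
    Finset.sum_eq_single (Fin.last n).castSucc (fun a _ ha => ?_) (by simp),
    Finset.sum_eq_single (Fin.last (n+1)) (fun b _ hb => ?_) (by simp)]
  · simp
    ring
  · have hb' : ¬ (Fin.last n).castSucc < b := fun h =>
      hb (Fin.ext (by rw [Fin.lt_def, Fin.val_castSucc, Fin.val_last] at h; simp; omega))
    simp [hb']
  · have ha' : (a : ℕ) ≠ n := fun h => ha (Fin.ext h)
    simp [ha']

section VolumePolynomial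

open MvPolynomial

variable {r : ℕ} {m : Fin (r+1) → Fin (r+1) → ℕ}

theorem isHomogeneous_vPlus : (vPlus r m).IsHomogeneous (Nphi r m - r) := by
  refine IsHomogeneous.sum _ _ _ fun i hi => ?_
  rw [← Finset.Nat.mem_antidiagonalTuple.1 hi, ← zero_add (∑ j, i j)]
  exact (isHomogeneous_C _ _).mul
    (IsHomogeneous.prod _ _ _ fun j _ => isHomogeneous_X_pow j (i j))

theorem X_pow_dvd_vPlus (j : Fin r) {q : ℕ} (h : ∀ i, i j < q → coeffI r m i = 0) :
    X j ^ q ∣ vPlus r m := by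
  refine Finset.dvd_sum fun i _ => ?_
  by_cases hq : q ≤ i j
  · exact dvd_mul_of_dvd_right ((pow_dvd_pow _ hq).trans
      (Finset.dvd_prod_of_mem (fun k => X k ^ i k) (Finset.mem_univ j))) _
  · simp [h i (not_le.1 hq)]

theorem degreeOf_vPlus_le (j : Fin r) {q : ℕ} (h : ∀ i, q < i j → coeffI r m i = 0) :
    degreeOf j (vPlus r m) ≤ q := by
  refine (degreeOf_sum_le _ _ _).trans (Finset.sup_le fun i _ => ?_)
  by_cases hq : i j ≤ q
  · have hmon : ∏ k, (X k : MvPolynomial (Fin r) ℚ) ^ i k =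
        monomial (Finsupp.equivFunOnFinite.symm i) 1 := by
      rw [monomial_eq, C_1, one_mul, Finsupp.prod_fintype _ _ (fun _ => pow_zero _)]
      rfl
    rw [hmon]
    exact (degreeOf_C_mul_le _ _ _).trans ((degreeOf_monomial_eq _ _ one_ne_zero).trans_le hq)
  · simp [h i (not_le.1 hq)]

end VolumePolynomial

/-- for a sequence `Φ` of `N` positive roots of `A_r` spanning `E_r` (with
multiplicities `m`), the nice-chamber volume polynomial `v_Φ^+` is homogeneous of degree
`N - r`, is divisible by `a_1^{(∑_{k=2}^{r+1} m_{1k}) - 1}`, and has degree at most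
`m_{r,r+1} - 1` in the variable `a_r`. -/
theorem stmt9 (r : ℕ) (hr : 1 ≤ r) (m : Fin (r+1) → Fin (r+1) → ℕ)
    (hsupp : ∀ a b : Fin (r+1), ¬ a < b → m a b = 0) :
    MvPolynomial.IsHomogeneous (vPlus r m) (Nphi r m - r) ∧
    (MvPolynomial.X (⟨0, by omega⟩ : Fin r)) ^ ((∑ b, m 0 b) - 1) ∣ vPlus r m ∧
    MvPolynomial.degreeOf (⟨r - 1, by omega⟩ : Fin r) (vPlus r m) ≤
      m (⟨r - 1, by omega⟩ : Fin (r+1)) (Fin.last r) - 1 := by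
  refine ⟨isHomogeneous_vPlus, X_pow_dvd_vPlus _ fun i hi => ?_,
    degreeOf_vPlus_le _ fun i hi => ?_⟩
  · exact coeffI_eq_zero_of_lt hr m (hsupp 0 0 (lt_irrefl 0)) i (by omega)
  · exact coeffI_eq_zero_of_le hr m i (by omega)

end
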